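/- arXiv:1803.04665 — 6 statements merged into one kernel-verified Lean document; each statement's English description precedes it below -/
import Mathlib

section
/- Let P and Q be probability measures on a measurable space (Ω, F) and let C ∈ F be any event. Then KL(P‖Q) ≥ kl(P(C), Q(C)), where kl denotes the binary relative entropy. In particular, the KL divergence between two probability measures is at least the binary relative entropy between the probabilities they assign to any fixed measurable set. -/
open MeasureTheory Classical

/-- Kullback–Leibler divergence `KL(P‖Q)`, equal to `∫ log(dP/dQ) dP` when
`P ≪ Q` (and this log-likelihood ratio is `P`-integrable), and `+∞` otherwise. -/
noncomputable def klDiv {Ω : Type*} [MeasurableSpace Ω] (P Q : Measure Ω) : EReal :=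
  if P ≪ Q ∧ Integrable (llr P Q) P then ((∫ ω, llr P Q ω ∂P : ℝ) : EReal) else ⊤

/-- Binary relative entropy. -/
noncomputable def klBern (x y : ℝ) : ℝ :=
  x * Real.log (x / y) + (1 - x) * Real.log ((1 - x) / (1 - y))

lemma aux_setIntegral_llr_ge {Ω : Type*} [MeasurableSpace Ω] (P Q : Measure Ω)
    [IsProbabilityMeasure P] [IsProbabilityMeasure Q]
    (hPQ : P ≪ Q) (hInt : Integrable (llr P Q) P)
    (A : Set Ω) (hA : MeasurableSet A) :
    (P A).toReal * Real.log ((P A).toReal / (Q A).toReal) ≤ ∫ ω in A, llr P Q ω ∂P := by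
  by_cases hp : P A = 0
  · rw [hp, Measure.restrict_eq_zero.mpr hp]
    simp
  have hq : Q A ≠ 0 := fun h => hp (hPQ h)
  set p : ℝ := (P A).toReal with hpdef
  set q : ℝ := (Q A).toReal with hqdef
  have hp0 : 0 < p := ENNReal.toReal_pos hp (measure_ne_top _ _)
  have hq0 : 0 < q := ENNReal.toReal_pos hq (measure_ne_top _ _)
  -- the inverse of the RN derivative
  set g : Ω → ℝ := fun ω ↦ ((P.rnDeriv Q ω)⁻¹).toReal with hgdef
  have hmeas : Measurable fun ω ↦ (P.rnDeriv Q ω)⁻¹ := (Measure.measurable_rnDeriv P Q).inv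
  have hlint : ∫⁻ ω in A, (P.rnDeriv Q ω)⁻¹ ∂P ≤ Q A := by
    have hP : P.restrict A = (Q.restrict A).withDensity (P.rnDeriv Q) := by
      rw [← restrict_withDensity hA, Measure.withDensity_rnDeriv_eq P Q hPQ]
    rw [hP, lintegral_withDensity_eq_lintegral_mul _ (Measure.measurable_rnDeriv P Q) hmeas]
    calc ∫⁻ ω in A, (P.rnDeriv Q * fun ω ↦ (P.rnDeriv Q ω)⁻¹) ω ∂Q
        ≤ ∫⁻ _ in A, 1 ∂Q := lintegral_mono fun ω => ENNReal.mul_inv_le_one _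
      _ = Q A := by simp
  have hlint_ne_top : ∫⁻ ω in A, (P.rnDeriv Q ω)⁻¹ ∂P ≠ ⊤ :=
    (lt_of_le_of_lt hlint (measure_lt_top _ _)).ne
  have hg_int : Integrable g (P.restrict A) :=
    integrable_toReal_of_lintegral_ne_top hmeas.aemeasurable hlint_ne_top
  have hg_integral_le : ∫ ω in A, g ω ∂P ≤ q := by
    have hfin : ∀ᵐ ω ∂(P.restrict A), (P.rnDeriv Q ω)⁻¹ < ⊤ := by
      refine ae_restrict_of_ae ?_
      filter_upwards [Measure.rnDeriv_pos hPQ] with ω hω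
      simp [ENNReal.inv_lt_top, hω]
    rw [hgdef, integral_toReal hmeas.aemeasurable hfin]
    exact ENNReal.toReal_mono (measure_ne_top _ _) hlint
  -- pointwise bound : llr ≥ 1 - log (q/p) - (p/q) * g
  have hpt : ∀ᵐ ω ∂(P.restrict A),
      1 - Real.log (q / p) - (p / q) * g ω ≤ llr P Q ω := by
    refine ae_restrict_of_ae ?_
    have h1 : ∀ᵐ ω ∂P, 0 < P.rnDeriv Q ω := Measure.rnDeriv_pos hPQ
    have h2 : ∀ᵐ ω ∂P, P.rnDeriv Q ω < ⊤ := hPQ.ae_le (Measure.rnDeriv_lt_top P Q)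
    filter_upwards [h1, h2] with ω hω1 hω2
    set x : ℝ := (P.rnDeriv Q ω).toReal with hxdef
    have hx0 : 0 < x := ENNReal.toReal_pos hω1.ne' hω2.ne
    have hgx : g ω = x⁻¹ := by
      simp only [hgdef, ENNReal.toReal_inv, hxdef]
    have hc0 : 0 < q / p := div_pos hq0 hp0
    have hkey : Real.log ((x * (q / p))⁻¹) ≤ (x * (q / p))⁻¹ - 1 :=
      Real.log_le_sub_one_of_pos (by positivity)
    rw [Real.log_inv] at hkey
    have hmul : Real.log (x * (q / p)) = Real.log x + Real.log (q / p) :=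
      Real.log_mul hx0.ne' hc0.ne'
    have hinv : (x * (q / p))⁻¹ = (p / q) * x⁻¹ := by
      rw [mul_inv, inv_div, mul_comm]
    rw [hmul, hinv] at hkey
    have : llr P Q ω = Real.log x := rfl
    rw [this, hgx]
    linarith
  have hconst_int : Integrable (fun ω ↦ 1 - Real.log (q / p) - (p / q) * g ω)
      (P.restrict A) := (integrable_const _).sub (hg_int.const_mul _)
  have hmono : ∫ ω in A, (1 - Real.log (q / p) - (p / q) * g ω) ∂P ≤ ∫ ω in A, llr P Q ω ∂P :=
    integral_mono_ae hconst_int hInt.restrict hpt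
  have hcompute : ∫ ω in A, (1 - Real.log (q / p) - (p / q) * g ω) ∂P
      = (1 - Real.log (q / p)) * p - (p / q) * ∫ ω in A, g ω ∂P := by
    rw [integral_sub (integrable_const _) (hg_int.const_mul _), integral_const,
      integral_const_mul]
    simp only [measureReal_def, Measure.restrict_apply_univ, ← hpdef, smul_eq_mul]
    ring
  have hlog : Real.log (q / p) = - Real.log (p / q) := by
    rw [← Real.log_inv, inv_div]
  have hfinal : p * Real.log (p / q)
      ≤ (1 - Real.log (q / p)) * p - (p / q) * ∫ ω in A, g ω ∂P := by
    have h1 : (p / q) * ∫ ω in A, g ω ∂P ≤ (p / q) * q :=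
      mul_le_mul_of_nonneg_left hg_integral_le (by positivity)
    have h2 : (p / q) * q = p := by field_simp
    rw [hlog]
    nlinarith
  calc p * Real.log (p / q) ≤ _ := hfinal
    _ ≤ _ := by rw [← hcompute]; exact hmono

/-- Event-based data-processing inequality: for probability measures `P, Q` and
any measurable event `C`, `KL(P‖Q) ≥ kl(P(C), Q(C))`. -/
theorem stmt_0 {Ω : Type*} [MeasurableSpace Ω] (P Q : Measure Ω)
    [IsProbabilityMeasure P] [IsProbabilityMeasure Q]
    (C : Set Ω) (hC : MeasurableSet C) :
    klDiv P Q ≥ (klBern (P C).toReal (Q C).toReal : EReal) := by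
  rw [klDiv]
  split_ifs with h
  · obtain ⟨hPQ, hInt⟩ := h
    rw [ge_iff_le, EReal.coe_le_coe_iff]
    have hsplit : ∫ ω, llr P Q ω ∂P = (∫ ω in C, llr P Q ω ∂P) + ∫ ω in Cᶜ, llr P Q ω ∂P :=
      (integral_add_compl hC hInt).symm
    have h1 := aux_setIntegral_llr_ge P Q hPQ hInt C hC
    have h2 := aux_setIntegral_llr_ge P Q hPQ hInt Cᶜ hC.compl
    have hPc : (P Cᶜ).toReal = 1 - (P C).toReal := by
      rw [prob_compl_eq_one_sub hC, ENNReal.toReal_sub_of_le prob_le_one ENNReal.one_ne_top,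
        ENNReal.toReal_one]
    have hQc : (Q Cᶜ).toReal = 1 - (Q C).toReal := by
      rw [prob_compl_eq_one_sub hC, ENNReal.toReal_sub_of_le prob_le_one ENNReal.one_ne_top,
        ENNReal.toReal_one]
    rw [hPc, hQc] at h2
    rw [hsplit, klBern]
    exact add_le_add h1 h2
  · exact le_top
end

section
/- Let T ∈ ℕ and for each t ∈ {1,…,T} let P_t and Q_t be probability measures on a measurable space (Ω_t, F_t). Let P = ⊗_{t=1}^T P_t and Q = ⊗_{t=1}^T Q_t be the product measures on the product space, and let C be any measurable subset of the product space. Then ∑_{t=1}^T KL(P_t‖Q_t) ≥ kl(P(C), Q(C)). -/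
/-! KL divergence tensorizes: the chain rule for composition-products gives
`KL(μ ⊗ ν ‖ μ' ⊗ ν') = KL(μ ‖ μ') + KL(ν ‖ ν')`, so `∑ₜ KL(Pₜ ‖ Qₜ) = KL(P ‖ Q)` by induction on `T`.
On the other hand, Gibbs' inequality applied to the restrictions of `P` and `Q` to `C` gives
`∫_C log (dP/dQ) dP ≥ P(C) log (P(C) / Q(C))`; adding the same bound for `Cᶜ` yields
`KL(P ‖ Q) ≥ kl(P(C), Q(C))`. -/

open MeasureTheory Classical

open scoped ENNReal

namespace MeasureTheory.Measure

variable {α : Type*} {mα : MeasurableSpace α}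

lemma rnDeriv_restrict_restrict (μ ν : Measure α) [HaveLebesgueDecomposition μ ν] [SigmaFinite ν]
    {s : Set α} (hs : MeasurableSet s) :
    (μ.restrict s).rnDeriv (ν.restrict s) =ᵐ[ν.restrict s] μ.rnDeriv ν := by
  refine (eq_rnDeriv (measurable_rnDeriv μ ν)
    (((mutuallySingular_singularPart μ ν).restrict s).mono le_rfl restrict_le_self) ?_).symm
  rw [← restrict_withDensity hs, ← restrict_add, ← haveLebesgueDecomposition_add]

end MeasureTheory.Measure

namespace InformationTheory

section Product

variable {α β : Type*} {mα : MeasurableSpace α} {mβ : MeasurableSpace β}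

lemma klDiv_map_measurableEquiv (μ ν : Measure α) [IsFiniteMeasure μ] [IsFiniteMeasure ν]
    (e : α ≃ᵐ β) : klDiv (μ.map e) (ν.map e) = klDiv μ ν := by
  refine le_antisymm (klDiv_map_le μ ν e.measurable) ?_
  calc klDiv μ ν = klDiv ((μ.map e).map e.symm) ((ν.map e).map e.symm) := by
        simp only [MeasurableEquiv.map_symm_map]
    _ ≤ klDiv (μ.map e) (ν.map e) := klDiv_map_le _ _ e.symm.measurable

lemma klDiv_prod (μ μ' : Measure α) (ν ν' : Measure β) [IsProbabilityMeasure μ]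
    [IsFiniteMeasure μ'] [IsProbabilityMeasure ν] [IsProbabilityMeasure ν'] :
    klDiv (μ.prod ν) (μ'.prod ν') = klDiv μ μ' + klDiv ν ν' := by
  -- the conditional term of the chain rule, computed after swapping the two factors
  have h_right : klDiv (μ.prod ν) (μ.prod ν') = klDiv ν ν' := by
    rw [← Measure.prod_swap (μ := ν), ← Measure.prod_swap (μ := ν'),
      show (Prod.swap : β × α → α × β) = MeasurableEquiv.prodComm from rfl,
      klDiv_map_measurableEquiv, ← Measure.compProd_const, ← Measure.compProd_const,
      klDiv_compProd_left]
  rw [← Measure.compProd_const, ← Measure.compProd_const, klDiv_compProd_eq_add,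
    Measure.compProd_const, Measure.compProd_const, h_right]

theorem klDiv_pi {n : ℕ} {Ω : Fin n → Type*} [∀ i, MeasurableSpace (Ω i)]
    (μ ν : ∀ i, Measure (Ω i)) [∀ i, IsProbabilityMeasure (μ i)]
    [∀ i, IsProbabilityMeasure (ν i)] :
    klDiv (Measure.pi μ) (Measure.pi ν) = ∑ i, klDiv (μ i) (ν i) := by
  induction n with
  | zero => simp [Measure.pi_of_empty μ, Measure.pi_of_empty ν, klDiv_self]
  | succ n ih =>
    rw [← (measurePreserving_piFinSuccAbove μ 0).symm.map_eq,
      ← (measurePreserving_piFinSuccAbove ν 0).symm.map_eq, klDiv_map_measurableEquiv,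
      klDiv_prod, ih, Fin.sum_univ_succ]
    rfl

end Product

section Restrict

variable {α : Type*} {mα : MeasurableSpace α} {μ ν : Measure α}

lemma llr_restrict_ae_eq [SigmaFinite μ] [SigmaFinite ν] (hμν : μ ≪ ν) {s : Set α}
    (hs : MeasurableSet s) :
    llr (μ.restrict s) (ν.restrict s) =ᵐ[μ.restrict s] llr μ ν := by
  filter_upwards [(hμν.restrict s).ae_le (Measure.rnDeriv_restrict_restrict μ ν hs)] with x hx
  simp only [llr, hx]

lemma mul_log_le_setIntegral_llr [IsFiniteMeasure μ] [IsFiniteMeasure ν] (hμν : μ ≪ ν)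
    (h_int : Integrable (llr μ ν) μ) {s : Set α} (hs : MeasurableSet s) :
    μ.real s * Real.log (μ.real s / ν.real s) ≤ ∫ x in s, llr μ ν x ∂μ := by
  have h_ae := llr_restrict_ae_eq hμν hs
  have h := mul_log_le_toReal_klDiv (hμν.restrict s) (h_int.restrict.congr h_ae.symm)
  rw [toReal_klDiv (hμν.restrict s) (h_int.restrict.congr h_ae.symm),
    integral_congr_ae h_ae] at h
  simpa [measureReal_restrict_apply_univ] using h

end Restrict

end InformationTheory

open InformationTheory in
lemma klBern_le_integral_llr {α : Type*} {mα : MeasurableSpace α} {μ ν : Measure α}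
    [IsProbabilityMeasure μ] [IsProbabilityMeasure ν] (hμν : μ ≪ ν)
    (h_int : Integrable (llr μ ν) μ) {s : Set α} (hs : MeasurableSet s) :
    klBern (μ.real s) (ν.real s) ≤ ∫ x, llr μ ν x ∂μ := by
  have h_in := mul_log_le_setIntegral_llr hμν h_int hs
  have h_out := mul_log_le_setIntegral_llr hμν h_int hs.compl
  rw [probReal_compl_eq_one_sub hs, probReal_compl_eq_one_sub hs] at h_out
  rw [klBern, ← integral_add_compl hs h_int]
  linarith

lemma klBern_le_klDiv {α : Type*} {mα : MeasurableSpace α} {μ ν : Measure α}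
    [IsProbabilityMeasure μ] [IsProbabilityMeasure ν] {s : Set α} (hs : MeasurableSet s) :
    (klBern (μ.real s) (ν.real s) : EReal) ≤ klDiv μ ν := by
  rw [klDiv]
  split_ifs with h
  · exact EReal.coe_le_coe_iff.mpr (klBern_le_integral_llr h.1 h.2 hs)
  · exact le_top

lemma klDiv_eq_coe_klDiv {α : Type*} {mα : MeasurableSpace α} (μ ν : Measure α)
    [IsProbabilityMeasure μ] [IsProbabilityMeasure ν] :
    klDiv μ ν = (InformationTheory.klDiv μ ν : EReal) := by
  -- Mathlib's `klDiv` is `ofReal (∫ llr + ν univ - μ univ)`; the correction vanishes here.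
  rw [klDiv]
  split_ifs with h
  · rw [← EReal.coe_ennreal_toReal (InformationTheory.klDiv_ne_top h.1 h.2),
      InformationTheory.toReal_klDiv_of_measure_eq h.1 (by simp)]
  · rw [InformationTheory.klDiv_eq_top_iff.mpr fun h₁ h₂ ↦ h ⟨h₁, h₂⟩]
    rfl

/-- Change-of-distribution inequality for product measures: for probability
measures `P_t, Q_t` on spaces `Ω_t` (`t = 1, …, T`) and any measurable subset
`C` of the product space, `∑_t KL(P_t‖Q_t) ≥ kl(P(C), Q(C))` where `P, Q` are
the product measures. -/
theorem stmt_1 {T : ℕ} {Ω : Fin T → Type*} [∀ t, MeasurableSpace (Ω t)]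
    (P Q : ∀ t, Measure (Ω t))
    [∀ t, IsProbabilityMeasure (P t)] [∀ t, IsProbabilityMeasure (Q t)]
    (C : Set (∀ t, Ω t)) (hC : MeasurableSet C) :
    ∑ t, klDiv (P t) (Q t) ≥
      (klBern ((Measure.pi P) C).toReal ((Measure.pi Q) C).toReal : EReal) := by
  calc (klBern ((Measure.pi P) C).toReal ((Measure.pi Q) C).toReal : EReal)
      ≤ klDiv (Measure.pi P) (Measure.pi Q) := klBern_le_klDiv hC
    _ = ∑ t, klDiv (P t) (Q t) := by
      simp only [klDiv_eq_coe_klDiv, InformationTheory.klDiv_pi]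
      exact map_sum (⟨⟨(↑), EReal.coe_ennreal_zero⟩, EReal.coe_ennreal_add⟩ : ℝ≥0∞ →+ EReal) _ _
end

section
/- Let (Ω, F, P) be a probability space, let m, n ∈ ℕ with n ≥ 1, and let Z_1, …, Z_n be independent identically distributed random variables taking values in {1, …, m} such that P(Z_a = i) ≤ α for every category i ∈ {1,…,m}. Assume 0 < δ ≤ α ≤ 1/3, m ≤ 1/α, and n·α ≥ 2·log(1/δ). Then P( there exists i ∈ {1,…,m} with |{a ∈ {1,…,n} : Z_a = i}| > 3·α·n ) ≤ δ; i.e., with probability at least 1−δ, every category receives at most 3·α·n of the n draws. -/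
open MeasureTheory ProbabilityTheory

/-- If `Z_1, …, Z_n` are i.i.d. random variables with values in `{1, …, m}`
(here `Fin m`) such that each category has probability at most `α`, with
`0 < δ ≤ α ≤ 1/3`, `m ≤ 1/α` and `n·α ≥ 2·log(1/δ)`, then with probability at
least `1−δ` every category receives at most `3·α·n` of the `n` draws. -/
theorem stmt_8 {Ω : Type*} [MeasurableSpace Ω] (P : Measure Ω)
    [IsProbabilityMeasure P] (m n : ℕ) (hn : 1 ≤ n)
    (Z : Fin n → Ω → Fin m)
    (hZ_meas : ∀ a, Measurable (Z a))
    (hZ_indep : iIndepFun Z P)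
    (hZ_ident : ∀ a b : Fin n, P.map (Z a) = P.map (Z b))
    (α δ : ℝ)
    (hZ_cat : ∀ (a : Fin n) (i : Fin m), P {ω | Z a ω = i} ≤ ENNReal.ofReal α)
    (hδ0 : 0 < δ) (hδα : δ ≤ α) (hα : α ≤ 1 / 3)
    (hm : (m : ℝ) ≤ 1 / α) (hnα : 2 * Real.log (1 / δ) ≤ (n : ℝ) * α) :
    P {ω | ∃ i : Fin m,
        3 * α * n < ((Finset.univ.filter fun a => Z a ω = i).card : ℝ)} ≤
      ENNReal.ofReal δ := by
  have hα0 : 0 < α := hδ0.trans_le hδα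
  set t := Real.log 3 with ht_def
  have ht1 : 1 ≤ t := by
    rw [ht_def, Real.le_log_iff_exp_le (by norm_num)]
    calc Real.exp 1 ≤ 2.7182818286 := Real.exp_one_lt_d9.le
    _ ≤ 3 := by norm_num
  have ht0 : (0:ℝ) ≤ t := by linarith
  have hexpt : Real.exp t = 3 := Real.exp_log (by norm_num)
  -- per-category Chernoff bound
  have key : ∀ i : Fin m,
      P {ω | 3 * α * n < ((Finset.univ.filter fun a => Z a ω = i).card : ℝ)}
        ≤ ENNReal.ofReal (δ ^ 2) := by
    intro i
    set X : Fin n → Ω → ℝ := fun a ω => if Z a ω = i then 1 else 0 with hX_def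
    have hX_meas : ∀ a, Measurable (X a) := by
      intro a
      have : X a = (fun j : Fin m => if j = i then (1:ℝ) else 0) ∘ Z a := rfl
      rw [this]
      exact (measurable_of_countable _).comp (hZ_meas a)
    have hX_indep : iIndepFun X P :=
      hZ_indep.comp (fun _ => fun j : Fin m => if j = i then (1:ℝ) else 0)
        (fun _ => measurable_of_countable _)
    have hX_exp : ∀ a, (fun ω => Real.exp (t * X a ω))
        = fun ω => 1 + (Real.exp t - 1) * X a ω := by
      intro a; funext ω
      by_cases h : Z a ω = i <;> simp [hX_def, h, Real.exp_zero]
    have hX_int : ∀ a, Integrable (X a) P := by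
      intro a
      refine (integrable_const (1:ℝ)).mono' (hX_meas a).aestronglyMeasurable ?_
      filter_upwards with ω
      by_cases h : Z a ω = i <;> simp [hX_def, h]
    have h_int : ∀ a : Fin n, Integrable (fun ω => Real.exp (t * X a ω)) P := by
      intro a
      rw [hX_exp a]
      exact (integrable_const (1:ℝ)).add ((hX_int a).const_mul _)
    have hXint_le : ∀ a, ∫ ω, X a ω ∂P ≤ α := by
      intro a
      have hA : MeasurableSet {ω | Z a ω = i} :=
        (hZ_meas a) (measurableSet_singleton i)
      have : X a = Set.indicator {ω | Z a ω = i} (fun _ => (1:ℝ)) := by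
        funext ω; by_cases h : Z a ω = i <;> simp [hX_def, h]
      rw [this, integral_indicator_const (1:ℝ) hA, smul_eq_mul, mul_one]
      have := hZ_cat a i
      calc (P {ω | Z a ω = i}).toReal
          ≤ (ENNReal.ofReal α).toReal :=
            ENNReal.toReal_mono ENNReal.ofReal_ne_top this
        _ = α := ENNReal.toReal_ofReal hα0.le
    have hmgf : ∀ a, mgf (X a) P t ≤ Real.exp (2 * α) := by
      intro a
      have : mgf (X a) P t = 1 + (Real.exp t - 1) * ∫ ω, X a ω ∂P := by
        rw [mgf, hX_exp a, integral_add (integrable_const _) ((hX_int a).const_mul _),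
          integral_const, MeasureTheory.integral_const_mul]
        simp
      rw [this, hexpt]
      have h1 : 1 + (3 - 1) * ∫ ω, X a ω ∂P ≤ 1 + 2 * α := by
        have := hXint_le a; linarith
      calc (1:ℝ) + (3 - 1) * ∫ ω, X a ω ∂P ≤ 1 + 2 * α := h1
        _ ≤ Real.exp (2 * α) := by linarith [Real.add_one_le_exp (2 * α)]
    -- Chernoff
    have hsum : ∀ ω, ((Finset.univ.filter fun a => Z a ω = i).card : ℝ)
        = ∑ a, X a ω := by
      intro ω
      rw [Finset.card_filter]
      push_cast
      rfl
    have hsub : {ω | 3 * α * n < ((Finset.univ.filter fun a => Z a ω = i).card : ℝ)}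
        ⊆ {ω | 3 * α * n ≤ (∑ a, X a) ω} := by
      intro ω hω
      simp only [Set.mem_setOf_eq] at hω ⊢
      rw [hsum ω] at hω
      simpa using hω.le
    have hcher := measure_ge_le_exp_mul_mgf (μ := P) (X := ∑ a, X a)
      (3 * α * n) ht0 (hX_indep.integrable_exp_mul_sum hX_meas
        (fun a _ => h_int a))
    rw [hX_indep.mgf_sum hX_meas] at hcher
    have hprod : ∏ a : Fin n, mgf (X a) P t ≤ Real.exp (2 * α * n) := by
      calc ∏ a : Fin n, mgf (X a) P t ≤ ∏ a : Fin n, Real.exp (2 * α) :=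
          Finset.prod_le_prod (fun a _ => mgf_nonneg) (fun a _ => hmgf a)
        _ = Real.exp (2 * α) ^ n := by simp
        _ = Real.exp ((n:ℝ) * (2 * α)) := (Real.exp_nat_mul _ n).symm
        _ = Real.exp (2 * α * n) := by ring_nf
    have hbound : (P {ω | 3 * α * n ≤ (∑ a, X a) ω}).toReal ≤ δ ^ 2 := by
      calc (P {ω | 3 * α * n ≤ (∑ a, X a) ω}).toReal
          ≤ Real.exp (-t * (3 * α * n)) * ∏ a : Fin n, mgf (X a) P t := hcher
        _ ≤ Real.exp (-t * (3 * α * n)) * Real.exp (2 * α * n) :=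
            mul_le_mul_of_nonneg_left hprod (Real.exp_pos _).le
        _ = Real.exp (-t * (3 * α * n) + 2 * α * n) := (Real.exp_add _ _).symm
        _ ≤ Real.exp (-(α * n)) := by
            apply Real.exp_le_exp.mpr
            have hn0 : (0:ℝ) ≤ (n:ℝ) := Nat.cast_nonneg n
            nlinarith [mul_nonneg hα0.le hn0]
        _ ≤ Real.exp (2 * Real.log δ) := by
            apply Real.exp_le_exp.mpr
            have : Real.log (1 / δ) = -Real.log δ := by
              rw [one_div, Real.log_inv]
            rw [this] at hnα
            linarith
        _ = δ ^ 2 := by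
            rw [two_mul, Real.exp_add, Real.exp_log hδ0]; ring
    calc P _ ≤ P {ω | 3 * α * n ≤ (∑ a, X a) ω} := measure_mono hsub
      _ ≤ ENNReal.ofReal (δ ^ 2) := by
          rw [← ENNReal.ofReal_toReal (measure_ne_top P _)]
          exact ENNReal.ofReal_le_ofReal hbound
  -- union bound
  have hset : {ω | ∃ i : Fin m,
      3 * α * n < ((Finset.univ.filter fun a => Z a ω = i).card : ℝ)}
      = ⋃ i : Fin m, {ω | 3 * α * n
          < ((Finset.univ.filter fun a => Z a ω = i).card : ℝ)} := by
    ext ω; simp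
  rw [hset]
  refine le_trans (measure_iUnion_le _) ?_
  calc ∑' i : Fin m, P {ω | 3 * α * n
        < ((Finset.univ.filter fun a => Z a ω = i).card : ℝ)}
      ≤ ∑' i : Fin m, ENNReal.ofReal (δ ^ 2) := ENNReal.tsum_le_tsum (fun i => key i)
    _ = (m : ENNReal) * ENNReal.ofReal (δ ^ 2) := by
        rw [tsum_fintype]; simp [Finset.sum_const, nsmul_eq_mul]
    _ ≤ ENNReal.ofReal δ := by
        rw [← ENNReal.ofReal_natCast, ← ENNReal.ofReal_mul (Nat.cast_nonneg m)]
        apply ENNReal.ofReal_le_ofReal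
        have hmδ : (m : ℝ) ≤ 1 / δ := hm.trans (by
          apply one_div_le_one_div_of_le hδ0 hδα)
        calc (m : ℝ) * δ ^ 2 ≤ (1 / δ) * δ ^ 2 := by
              apply mul_le_mul_of_nonneg_right hmδ (sq_nonneg δ)
          _ = δ := by field_simp
end

section
/- For all real numbers x, y with 0 < x < y < 1, there exists a unique z ∈ (x, y) such that kl(z, x) = kl(z, y), where kl denotes the binary relative entropy. (This unique z is used to define the Chernoff information d*(x,y) := kl(z, x) between two Bernoulli distributions of means x and y.) -/
open Real Set InformationTheory

lemma klBern_self (x : ℝ) : klBern x x = 0 := by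
  rcases eq_or_ne x 0 with rfl | hx
  · simp [klBern]
  rcases eq_or_ne (1 - x) 0 with hx1 | hx1
  · simp [klBern, hx1]
  simp [klBern, div_self hx, div_self hx1]

lemma klBern_eq_mul_klFun_add_mul_klFun (x : ℝ) {y : ℝ} (hy : y ≠ 0) (hy1 : 1 - y ≠ 0) :
    klBern x y = y * klFun (x / y) + (1 - y) * klFun ((1 - x) / (1 - y)) := by
  simp only [klBern, klFun_apply]
  field_simp
  ring

lemma klBern_pos {x y : ℝ} (hx : 0 ≤ x) (hx1 : x ≤ 1) (hy : 0 < y) (hy1 : y < 1) (hxy : x ≠ y) :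
    0 < klBern x y := by
  have h1y : 0 < 1 - y := by linarith
  rw [klBern_eq_mul_klFun_add_mul_klFun x hy.ne' h1y.ne']
  have hxy' : x / y ≠ 1 := fun h ↦ hxy ((div_eq_one_iff_eq hy.ne').1 h)
  have hpos : 0 < klFun (x / y) :=
    (klFun_nonneg (by positivity)).lt_of_ne' fun h ↦ hxy' ((klFun_eq_zero_iff (by positivity)).1 h)
  have hnonneg : 0 ≤ klFun ((1 - x) / (1 - y)) :=
    klFun_nonneg (div_nonneg (by linarith) h1y.le)
  positivity

lemma mul_log_div_sub_mul_log_div (w : ℝ) {x y : ℝ} (hx : x ≠ 0) (hy : y ≠ 0) :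
    w * log (w / x) - w * log (w / y) = w * log (y / x) := by
  rcases eq_or_ne w 0 with rfl | hw
  · simp
  rw [log_div hw hx, log_div hw hy, log_div hy hx]
  ring

lemma klBern_sub_klBern (w : ℝ) {x y : ℝ} (hx : x ≠ 0) (hy : y ≠ 0) (hx1 : 1 - x ≠ 0)
    (hy1 : 1 - y ≠ 0) :
    klBern w x - klBern w y = w * log (y / x) + (1 - w) * log ((1 - y) / (1 - x)) := by
  rw [← mul_log_div_sub_mul_log_div w hx hy, ← mul_log_div_sub_mul_log_div (1 - w) hx1 hy1]
  simp only [klBern]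
  ring

lemma existsUnique_mem_Ioo_mul_add_eq_zero {a b x y : ℝ} (hxy : x < y) (hx : a * x + b < 0)
    (hy : 0 < a * y + b) : ∃! z, z ∈ Ioo x y ∧ a * z + b = 0 := by
  have ha : 0 < a := by nlinarith
  refine ⟨-b / a, ⟨⟨?_, ?_⟩, by field_simp; ring⟩, ?_⟩
  · rw [lt_div_iff₀ ha]; linarith
  · rw [div_lt_iff₀ ha]; linarith
  · rintro z ⟨-, hz⟩
    field_simp
    linarith

/-- For `0 < x < y < 1` there is a unique `z ∈ (x,y)` with `kl(z,x) = kl(z,y)`: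
the Chernoff information `d*(x,y) := kl(z,x)` is well defined. -/
theorem stmt_9 (x y : ℝ) (hx : 0 < x) (hxy : x < y) (hy : y < 1) :
    ∃! z : ℝ, z ∈ Set.Ioo x y ∧ klBern z x = klBern z y := by
  have hy0 : 0 < y := hx.trans hxy
  have hx1 : 0 < 1 - x := by linarith
  have hy1 : 0 < 1 - y := by linarith
  set a := log (y / x) - log ((1 - y) / (1 - x))
  set b := log ((1 - y) / (1 - x))
  have hdiff (w : ℝ) : klBern w x - klBern w y = a * w + b := by
    rw [klBern_sub_klBern w hx.ne' hy0.ne' hx1.ne' hy1.ne']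
    ring
  have hax : a * x + b < 0 := by
    rw [← hdiff, klBern_self, zero_sub, neg_neg_iff_pos]
    exact klBern_pos hx.le (by linarith) hy0 hy hxy.ne
  have hay : 0 < a * y + b := by
    rw [← hdiff, klBern_self, sub_zero]
    exact klBern_pos hy0.le hy.le hx (by linarith) hxy.ne'
  refine (existsUnique_congr fun z ↦ ?_).2 (existsUnique_mem_Ioo_mul_add_eq_zero hxy hax hay)
  rw [← hdiff, sub_eq_zero]
end

section
/- Let 0 < x < y < 1 and let z ∈ (x, y) be the (unique) point satisfying kl(z, x) = kl(z, y), so that d*(x,y) := kl(z,x) is the Chernoff information between Bernoulli distributions of means x and y. Then (y−x)²/2 < d*(x,y) < kl(x,y) < (y−x)²/(y·(1−y)), where kl denotes the binary relative entropy. -/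
open Real Set

lemma klBern_eq (p q : ℝ) (hp : 0 < p) (hq : 0 < q) (hq1 : q < 1) (hp1 : p < 1) :
    klBern p q = p * Real.log p - p * Real.log q + (1 - p) * Real.log (1 - p)
      - (1 - p) * Real.log (1 - q) := by
  unfold klBern
  rw [Real.log_div hp.ne' hq.ne', Real.log_div (by linarith) (by linarith)]
  ring

lemma klBern_symm (p q : ℝ) : klBern (1 - p) (1 - q) = klBern p q := by
  unfold klBern
  rw [show (1:ℝ) - (1 - p) = p by ring, show (1:ℝ) - (1 - q) = q by ring]
  ring

lemma hasDerivAt_G (u : ℝ) (hu : 0 < u) (hu1 : u < 1) :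
    HasDerivAt (fun t => Real.log t - Real.log (1 - t) - 4 * t)
      (u⁻¹ + (1 - u)⁻¹ - 4) u := by
  have h1 : HasDerivAt Real.log u⁻¹ u := Real.hasDerivAt_log hu.ne'
  have h2 : HasDerivAt (fun t : ℝ => 1 - t) (-1) u := (hasDerivAt_id u).const_sub 1
  have h3 : HasDerivAt (fun t : ℝ => Real.log (1 - t)) ((1 - u)⁻¹ * (-1)) u :=
    (Real.hasDerivAt_log (by intro h; rw [sub_eq_zero] at h; linarith)).comp u h2
  have h4 : HasDerivAt (fun t : ℝ => 4 * t) 4 u := by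
    simpa using (hasDerivAt_id u).const_mul 4
  refine ((h1.sub h3).sub h4).congr_deriv ?_
  ring

lemma gmono (s t : ℝ) (hs : 0 < s) (hst : s < t) (ht : t < 1) :
    Real.log s - Real.log (1 - s) - 4 * s < Real.log t - Real.log (1 - t) - 4 * t := by
  set G : ℝ → ℝ := fun t => Real.log t - Real.log (1 - t) - 4 * t with hG
  have hpos : ∀ u, 0 < u → u < 1 → u ≠ 1/2 → 0 < deriv G u := by
    intro u hu hu1 hne
    rw [(hasDerivAt_G u hu hu1).deriv]
    have h2u : 1 - 2*u ≠ 0 := by intro h0; apply hne; linarith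
    have h1u : 0 < 1 - u := by linarith
    have h : u⁻¹ + (1-u)⁻¹ - 4 = (1 - 2*u)^2 / (u * (1-u)) := by
      field_simp; ring
    rw [h]
    positivity
  have hcont : ∀ u, 0 < u → u < 1 → ContinuousAt G u := fun u hu hu1 =>
    (hasDerivAt_G u hu hu1).continuousAt
  have m1 : StrictMonoOn G (Ioc 0 (1/2 : ℝ)) := by
    apply strictMonoOn_of_deriv_pos (convex_Ioc _ _)
    · intro u hu
      exact (hcont u hu.1 (by linarith [hu.2])).continuousWithinAt
    · rw [interior_Ioc]
      intro u hu
      exact hpos u hu.1 (by linarith [hu.2]) (ne_of_lt hu.2)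
  have m2 : StrictMonoOn G (Ico (1/2 : ℝ) 1) := by
    apply strictMonoOn_of_deriv_pos (convex_Ico _ _)
    · intro u hu
      exact (hcont u (by linarith [hu.1]) hu.2).continuousWithinAt
    · rw [interior_Ico]
      intro u hu
      exact hpos u (by linarith [hu.1]) hu.2 (ne_of_gt hu.1)
  rcases le_or_gt t (1/2) with h | h
  · exact m1 ⟨hs, by linarith⟩ ⟨by linarith, h⟩ hst
  · rcases le_or_gt (1/2) s with h2 | h2
    · exact m2 ⟨h2, by linarith⟩ ⟨by linarith, ht⟩ hst
    · calc G s < G (1/2) := m1 ⟨hs, h2.le⟩ ⟨by linarith, le_refl _⟩ h2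
        _ < G t := m2 ⟨le_refl _, by norm_num⟩ ⟨le_of_lt h, ht⟩ h

lemma hasDerivAt_g (a b : ℝ) (u : ℝ) (hu : 0 < u) (hu1 : u < 1) :
    HasDerivAt (fun t => t * Real.log t - t * a + (1 - t) * Real.log (1 - t) - (1 - t) * b)
      (Real.log u - a - Real.log (1 - u) + b) u := by
  have hA : HasDerivAt (fun x : ℝ => x * Real.log x) (Real.log u + 1) u :=
    Real.hasDerivAt_mul_log hu.ne'
  have hB : HasDerivAt (fun t : ℝ => t * a) a u := by
    simpa using (hasDerivAt_id u).mul_const a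
  have hw : HasDerivAt (fun t : ℝ => 1 - t) (-1) u := (hasDerivAt_id u).const_sub 1
  have hC : HasDerivAt (fun t : ℝ => (1 - t) * Real.log (1 - t))
      ((Real.log (1 - u) + 1) * (-1)) u :=
    (Real.hasDerivAt_mul_log (by intro h; rw [sub_eq_zero] at h; linarith)).comp u hw
  have hD : HasDerivAt (fun t : ℝ => (1 - t) * b) (-b) u := by
    simpa using hw.mul_const b
  refine (((hA.sub hB).add hC).sub hD).congr_deriv ?_
  ring

lemma pinsker_core (q p : ℝ) (hq : 0 < q) (hqp : q < p) (hp : p < 1) :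
    2 * (p - q)^2 < klBern p q := by
  set F : ℝ → ℝ := fun t => t * Real.log t - t * Real.log q
      + (1 - t) * Real.log (1 - t) - (1 - t) * Real.log (1 - q) - 2 * (t - q)^2 with hF
  have hd : ∀ u, 0 < u → u < 1 → HasDerivAt F
      (Real.log u - Real.log q - Real.log (1 - u) + Real.log (1 - q) - 4 * (u - q)) u := by
    intro u hu hu1
    have h1 := hasDerivAt_g (Real.log q) (Real.log (1 - q)) u hu hu1
    have h2 : HasDerivAt (fun t : ℝ => 2 * (t - q)^2) (4 * (u - q)) u := by
      have := (((hasDerivAt_id u).sub_const q).pow 2).const_mul 2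
      refine this.congr_deriv ?_
      push_cast [id_eq]
      ring
    exact h1.sub h2
  have hmono : StrictMonoOn F (Icc q p) := by
    apply strictMonoOn_of_deriv_pos (convex_Icc _ _)
    · intro u hu
      exact ((hd u (lt_of_lt_of_le hq hu.1) (lt_of_le_of_lt hu.2 hp)).continuousAt).continuousWithinAt
    · rw [interior_Icc]
      intro u hu
      rw [(hd u (hq.trans hu.1) (hu.2.trans hp)).deriv]
      have := gmono q u hq hu.1 (hu.2.trans hp)
      linarith
  have h0 : F q = 0 := by simp only [hF]; ring
  have h1 : F q < F p := hmono (left_mem_Icc.mpr hqp.le) (right_mem_Icc.mpr hqp.le) hqp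
  rw [klBern_eq p q (hq.trans hqp) hq (hqp.trans hp) hp]
  rw [h0] at h1
  simp only [hF] at h1
  linarith

lemma klBern_lt_first (x z y : ℝ) (hx : 0 < x) (hxz : x < z) (hzy : z < y) (hy : y < 1) :
    klBern z y < klBern x y := by
  set f : ℝ → ℝ := fun t => t * Real.log t - t * Real.log y
      + (1 - t) * Real.log (1 - t) - (1 - t) * Real.log (1 - y) with hf
  have hanti : StrictAntiOn f (Icc x z) := by
    apply strictAntiOn_of_deriv_neg (convex_Icc _ _)
    · intro u hu
      exact (hasDerivAt_g (Real.log y) (Real.log (1-y)) u (lt_of_lt_of_le hx hu.1)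
        (by have := hu.2; linarith)).continuousAt.continuousWithinAt
    · rw [interior_Icc]
      intro u hu
      have hu0 : 0 < u := hx.trans hu.1
      have huy : u < y := hu.2.trans hzy
      have hu1 : u < 1 := huy.trans hy
      rw [(hasDerivAt_g (Real.log y) (Real.log (1-y)) u hu0 hu1).deriv]
      have l1 : Real.log u < Real.log y := Real.log_lt_log hu0 huy
      have l2 : Real.log (1 - y) < Real.log (1 - u) :=
        Real.log_lt_log (by linarith) (by linarith)
      linarith
  have h := hanti (left_mem_Icc.mpr (le_of_lt hxz)) (right_mem_Icc.mpr (le_of_lt hxz)) hxz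
  simp only [hf] at h
  have hy0 : 0 < y := by linarith
  rw [klBern_eq z y (by linarith) hy0 hy (by linarith),
      klBern_eq x y hx hy0 hy (by linarith)]
  exact h

lemma klBern_lt_upper (x y : ℝ) (hx : 0 < x) (hxy : x < y) (hy : y < 1) :
    klBern x y < (y - x)^2 / (y * (1 - y)) := by
  have hy0 : 0 < y := hx.trans hxy
  have h1y : 0 < 1 - y := by linarith
  have h1x : 0 < 1 - x := by linarith
  have hne1 : x / y ≠ 1 := by
    intro h; rw [div_eq_one_iff_eq hy0.ne'] at h; linarith
  have hne2 : (1 - x) / (1 - y) ≠ 1 := by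
    intro h; rw [div_eq_one_iff_eq h1y.ne'] at h; linarith
  have l1 : Real.log (x / y) < x / y - 1 :=
    Real.log_lt_sub_one_of_pos (div_pos hx hy0) hne1
  have l2 : Real.log ((1 - x) / (1 - y)) < (1 - x) / (1 - y) - 1 :=
    Real.log_lt_sub_one_of_pos (div_pos h1x h1y) hne2
  have key : klBern x y < x * (x/y - 1) + (1-x) * ((1-x)/(1-y) - 1) := by
    unfold klBern
    exact add_lt_add (mul_lt_mul_of_pos_left l1 hx) (mul_lt_mul_of_pos_left l2 h1x)
  have e : x * (x/y - 1) + (1-x) * ((1-x)/(1-y) - 1) = (y-x)^2 / (y*(1-y)) := by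
    field_simp
    ring
  linarith

/-- If `0 < x < y < 1` and `z ∈ (x,y)` satisfies `kl(z,x) = kl(z,y)`, so that
`d*(x,y) = kl(z,x)` is the Chernoff information between Bernoulli distributions
of means `x` and `y`, then `(y−x)²/2 < d*(x,y) < kl(x,y) < (y−x)²/(y(1−y))`. -/
theorem stmt_10 (x y z : ℝ) (hx : 0 < x) (hxy : x < y) (hy : y < 1)
    (hz : z ∈ Set.Ioo x y) (hkl : klBern z x = klBern z y) :
    (y - x) ^ 2 / 2 < klBern z x ∧
    klBern z x < klBern x y ∧
    klBern x y < (y - x) ^ 2 / (y * (1 - y)) := by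
  obtain ⟨hxz, hzy⟩ := hz
  have hz0 : 0 < z := hx.trans hxz
  have hz1 : z < 1 := hzy.trans hy
  have h1 : 2 * (z - x)^2 < klBern z x := pinsker_core x z hx hxz hz1
  have h2 : 2 * (y - z)^2 < klBern z y := by
    have := pinsker_core (1 - y) (1 - z) (by linarith) (by linarith) (by linarith)
    rw [klBern_symm z y] at this
    have e : ((1:ℝ) - z - (1 - y))^2 = (y - z)^2 := by ring
    linarith [this, e ▸ this]
  refine ⟨?_, ?_, klBern_lt_upper x y hx hxy hy⟩
  · nlinarith [sq_nonneg (x + y - 2*z)]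
  · rw [hkl]
    exact klBern_lt_first x z y hx hxz hzy hy
end

section
/- Let ν be a probability measure on ℝ, μ* ∈ ℝ with ν((μ*, ∞)) = 0, and let β > 0 and E' > 0 be constants such that ν([μ*−ρ, ∞)) ≤ E'·ρ^β for all ρ > 0. Define the CDF G(τ) := ν((−∞, τ]) and the generalized inverse G⁻¹(p) := inf{ θ ∈ ℝ : G(θ) ≥ p }. Then for every α ∈ (0, 1), μ* − G⁻¹(1−α) ≥ (α/E')^{1/β}. -/
open MeasureTheory

/-- Quantile bound from an upper tail estimate: if the reservoir distribution
`ν` has top of support `μ*` and satisfies `ν([μ*−ρ, ∞)) ≤ E'·ρ^β` for all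
`ρ > 0`, then for every `α ∈ (0,1)`,
`μ* − G⁻¹(1−α) ≥ (α/E')^{1/β}`, where `G(τ) = ν((−∞,τ])` and
`G⁻¹(p) = inf{θ : G(θ) ≥ p}`. -/
theorem stmt_14 (ν : Measure ℝ) [IsProbabilityMeasure ν] (μstar : ℝ)
    (hsupp : ν (Set.Ioi μstar) = 0) (β E' : ℝ) (hβ : 0 < β) (hE' : 0 < E')
    (htail : ∀ ρ : ℝ, 0 < ρ →
      (ν (Set.Ici (μstar - ρ))).toReal ≤ E' * ρ ^ β)
    (α : ℝ) (hα0 : 0 < α) (hα1 : α < 1) :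
    (α / E') ^ (1 / β) ≤
      μstar - sInf {θ : ℝ | 1 - α ≤ (ν (Set.Iic θ)).toReal} := by
  set c : ℝ := (α / E') ^ (1 / β) with hc
  have hdiv : 0 < α / E' := div_pos hα0 hE'
  have hcpos : 0 < c := Real.rpow_pos_of_pos hdiv _
  have hcβ : c ^ β = α / E' := by
    rw [hc, one_div, Real.rpow_inv_rpow hdiv.le hβ.ne']
  set S : Set ℝ := {θ : ℝ | 1 - α ≤ (ν (Set.Iic θ)).toReal} with hS
  -- split lemma
  have hsplit : ∀ t : ℝ, (ν (Set.Iic t)).toReal = 1 - (ν (Set.Ioi t)).toReal := by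
    intro t
    have h1 : ν (Set.Iic t) + ν (Set.Ioi t) = 1 := by
      rw [← measure_union (Set.Iic_disjoint_Ioi le_rfl) measurableSet_Ioi,
        Set.Iic_union_Ioi, measure_univ]
    have hfin1 : ν (Set.Iic t) ≠ ⊤ := measure_ne_top _ _
    have hfin2 : ν (Set.Ioi t) ≠ ⊤ := measure_ne_top _ _
    have := congrArg ENNReal.toReal h1
    rw [ENNReal.toReal_add hfin1 hfin2, ENNReal.toReal_one] at this
    linarith
  -- membership: μstar - c ∈ S
  have hmem : μstar - c ∈ S := by
    have h1 : (ν (Set.Ioi (μstar - c))).toReal ≤ α := by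
      have hsub : Set.Ioi (μstar - c) ⊆ Set.Ici (μstar - c) := Set.Ioi_subset_Ici_self
      have := htail c hcpos
      calc (ν (Set.Ioi (μstar - c))).toReal
          ≤ (ν (Set.Ici (μstar - c))).toReal := by
            exact ENNReal.toReal_mono (measure_ne_top _ _) (measure_mono hsub)
        _ ≤ E' * c ^ β := this
        _ = α := by rw [hcβ]; field_simp
    simp only [hS, Set.mem_setOf_eq, hsplit]
    linarith
  -- bounded below
  have hbdd : BddBelow S := by
    have htend : Filter.Tendsto (fun n : ℕ => ν (Set.Iic (-(n : ℝ)))) Filter.atTop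
        (nhds (ν (⋂ n : ℕ, Set.Iic (-(n : ℝ))))) :=
      tendsto_measure_iInter_atTop
        (fun n => measurableSet_Iic.nullMeasurableSet)
        (fun m n hmn => Set.Iic_subset_Iic.mpr (by exact_mod_cast neg_le_neg (Nat.cast_le.mpr hmn)))
        ⟨0, measure_ne_top _ _⟩
    have hempty : (⋂ n : ℕ, Set.Iic (-(n : ℝ))) = ∅ := by
      ext x
      simp only [Set.mem_iInter, Set.mem_Iic, Set.mem_empty_iff_false, iff_false, not_forall,
        not_le]
      obtain ⟨n, hn⟩ := exists_nat_gt (-x)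
      exact ⟨n, by linarith⟩
    rw [hempty, measure_empty] at htend
    have htend' : Filter.Tendsto (fun n : ℕ => (ν (Set.Iic (-(n : ℝ)))).toReal) Filter.atTop
        (nhds 0) := by
      have := (ENNReal.tendsto_toReal (by simp)).comp htend
      exact this
    have hlt : ∃ n : ℕ, (ν (Set.Iic (-(n : ℝ)))).toReal < 1 - α := by
      have := htend'.eventually (eventually_lt_nhds (by linarith : (0:ℝ) < 1 - α))
      exact this.exists
    obtain ⟨n, hn⟩ := hlt
    refine ⟨-(n : ℝ), fun θ hθ => ?_⟩
    by_contra hlt'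
    push_neg at hlt'
    have : (ν (Set.Iic θ)).toReal ≤ (ν (Set.Iic (-(n : ℝ)))).toReal :=
      ENNReal.toReal_mono (measure_ne_top _ _) (measure_mono (Set.Iic_subset_Iic.mpr hlt'.le))
    have hθmem : 1 - α ≤ (ν (Set.Iic θ)).toReal := hθ
    linarith
  have hinf : sInf S ≤ μstar - c := csInf_le hbdd hmem
  linarith
end
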